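/- Let M = [a,b) and N = [c,d) be interval modules (0 ≤ a < b, 0 ≤ c < d) with m₁ > m₂, and set E = max{|a−d|, |b−c|}. Then m₂ < m₁ < E and: (a) for every ε with m₂ ≤ ε < m₁, all four spaces Hom(M, N·ε), Hom(N, M·ε), Hom(M, M·2ε), Hom(N, N·2ε) are zero; (b) for every ε with m₁ ≤ ε < E, exactly one of Hom(M, N·ε), Hom(N, M·ε) is nonzero, and Hom(M, M·2ε) = Hom(N, N·2ε) = 0; (c) for every ε ≥ E, all four spaces are zero. (This expresses that for interval modules the progression of varieties of ε-interleavings in the case m₁ > m₂ is: origin, coordinate axis, origin.) -/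

import Mathlib

open scoped NNReal

/-- A persistence module: a functor from `[0,∞)` to real vector spaces. -/
structure PM where
  V : ℝ≥0 → Type
  [grp : ∀ x, AddCommGroup (V x)]
  [mod : ∀ x, Module ℝ (V x)]
  map : ∀ {x y : ℝ≥0}, x ≤ y → (V x →ₗ[ℝ] V y)
  map_id : ∀ x : ℝ≥0, map (le_refl x) = LinearMap.id
  map_comp : ∀ {x y z : ℝ≥0} (h1 : x ≤ y) (h2 : y ≤ z),
    (map h2).comp (map h1) = map (h1.trans h2)

attribute [instance] PM.grp PM.mod

/-- A morphism of persistence modules. -/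
structure PM.Hom (M N : PM) where
  app : ∀ x : ℝ≥0, M.V x →ₗ[ℝ] N.V x
  comm : ∀ {x y : ℝ≥0} (h : x ≤ y), (app y).comp (M.map h) = (N.map h).comp (app x)

/-- The shifted module `M·ε`. -/
def PM.shift (M : PM) (ε : ℝ≥0) : PM where
  V x := M.V (x + ε)
  grp x := inferInstance
  mod x := inferInstance
  map h := M.map (add_le_add h (le_refl ε))
  map_id x := M.map_id (x + ε)
  map_comp h1 h2 := M.map_comp _ _

noncomputable def intervalSub (α β : ℝ) (x : ℝ≥0) : Submodule ℝ ℝ :=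
  if α ≤ (x : ℝ) ∧ (x : ℝ) < β then ⊤ else ⊥

/-- The interval module `[α,β)`. -/
noncomputable def intervalModule (α β : ℝ) : PM where
  V x := ↥(intervalSub α β x)
  grp x := inferInstance
  mod x := inferInstance
  map {x y} h := LinearMap.codRestrict _
      ((if α ≤ (x : ℝ) ∧ (y : ℝ) < β then (1 : ℝ) else 0) • (intervalSub α β x).subtype)
      (by
        intro v
        by_cases hy : α ≤ (y : ℝ) ∧ (y : ℝ) < β
        · simp [intervalSub, hy]
        · have hc : ¬(α ≤ (x : ℝ) ∧ (y : ℝ) < β) := by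
            intro hc
            exact hy ⟨le_trans hc.1 (by exact_mod_cast h), hc.2⟩
          rw [if_neg hc, zero_smul]
          simp [intervalSub, hy]
          rfl)
  map_id x := by
    ext v
    by_cases hx : α ≤ (x : ℝ) ∧ (x : ℝ) < β
    · simp [hx]
    · have hv : (v : ℝ) = 0 := by
        have h2 := v.2
        simp only [intervalSub, if_neg hx, Submodule.mem_bot] at h2
        exact h2
      simp [hx, hv]
  map_comp {x y z} h1 h2 := by
    ext v
    by_cases hC : α ≤ (x : ℝ) ∧ (z : ℝ) < β
    · have hA : α ≤ (x : ℝ) ∧ (y : ℝ) < β :=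
        ⟨hC.1, lt_of_le_of_lt (by exact_mod_cast h2) hC.2⟩
      have hB : α ≤ (y : ℝ) ∧ (z : ℝ) < β :=
        ⟨le_trans hC.1 (by exact_mod_cast h1), hC.2⟩
      simp [hA, hB, hC]
    · rcases not_and_or.mp hC with hx | hz
      · have hA : ¬(α ≤ (x : ℝ) ∧ (y : ℝ) < β) := fun h => hx h.1
        simp [hA, hC]
        split_ifs <;> simp
      · have hB : ¬(α ≤ (y : ℝ) ∧ (z : ℝ) < β) := fun h => hz h.2
        simp [hB, hC]

/-- `Hom(M,N) ≠ {0}`: there is a nonzero morphism from `M` to `N`. -/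
def HomNeZero (M N : PM) : Prop := ∃ F : PM.Hom M N, ∃ x, F.app x ≠ 0

/-- `S_{M,N} = {x ≥ 0 : Hom(M, N·x) ≠ {0}}`. -/
noncomputable def Sset (M N : PM) : Set ℝ :=
  {x : ℝ | 0 ≤ x ∧ HomNeZero M (N.shift x.toNNReal)}

/-- The canonical morphism `Π_M^{M·τ} : M → M·τ`. -/
def PM.pi (M : PM) (τ : ℝ≥0) : M.Hom (M.shift τ) where
  app x := M.map le_self_add
  comm {x y} h := by
    show (M.map le_self_add).comp (M.map h) =
      (M.map (add_le_add h (le_refl τ))).comp (M.map le_self_add)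
    rw [M.map_comp, M.map_comp]

/-- The pair `(Φ, Ψ)` is an `ε`-interleaving between `M` and `N`:
`(Ψ·ε) ∘ Φ = Π_M^{M·2ε}` and `(Φ·ε) ∘ Ψ = Π_N^{N·2ε}` (expressed pointwise). -/
def IsInterleaving (M N : PM) (ε : ℝ≥0)
    (Φ : M.Hom (N.shift ε)) (Ψ : N.Hom (M.shift ε)) : Prop :=
  (∀ x : ℝ≥0, (Ψ.app (x + ε)).comp (Φ.app x) =
      M.map (le_self_add.trans le_self_add : x ≤ x + ε + ε)) ∧
  (∀ x : ℝ≥0, (Φ.app (x + ε)).comp (Ψ.app x) =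
      N.map (le_self_add.trans le_self_add : x ≤ x + ε + ε))

/-!
A nonzero morphism `[a,b) → [c,d)·τ` can only exist when `c ≤ a + τ < d ≤ b + τ`: it is
nonzero at `a` because the structure maps of `[a,b)` out of `a` are onto, and it would be
killed at `b` if `b + τ < d`, where the structure maps of `[c,d)·τ` are injective while those of
`[a,b)` vanish. Conversely, under these inequalities the identity of `ℝ` on the common support
is such a morphism. Once `ε ≥ m₂`, the self-shifts `Hom(M, M·2ε)` and `Hom(N, N·2ε)` vanish and
the condition for `Hom(M, N·ε) ≠ 0` becomes `m₁ ≤ ε < d - a` (for `Hom(N, M·ε)`: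
`m₁ ≤ ε < b - c`); the three regimes are then read off from these inequalities.
-/

section RealArithmetic

variable {a b c d ε : ℝ}

theorem max_abs_sub_lt_max_abs_sub (hab : a < b) (hcd : c < d) :
    max |a - c| |b - d| < max |a - d| |b - c| := by
  grind

theorem interval_shift_bounds_iff (hb : b - a ≤ 2 * ε) (hd : d - c ≤ 2 * ε) :
    (c ≤ a + ε ∧ a + ε < d ∧ d ≤ b + ε) ↔ max |a - c| |b - d| ≤ ε ∧ ε < d - a := by
  grind

/- Both cannot hold: if, say, `m₁ = a - c`, then `d - a = (d - c) - (a - c) < 2 m₁ - m₁`;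
the other three cases are alike. -/
theorem xor_lt_sub_of_max_abs_sub_le (hcd : c < d)
    (hm : max ((b - a) / 2) ((d - c) / 2) < max |a - c| |b - d|)
    (h₁ : max |a - c| |b - d| ≤ ε) (h₂ : ε < max |a - d| |b - c|) :
    Xor (ε < d - a) (ε < b - c) := by
  grind

end RealArithmetic

namespace PM.Hom

variable {M N : PM} (F : M.Hom N) {x y : ℝ≥0}

theorem app_eq_zero_of_map_surjective (h : x ≤ y) (hs : Function.Surjective (M.map h))
    (hx : F.app x = 0) : F.app y = 0 := by
  refine LinearMap.ext fun w => ?_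
  obtain ⟨v, rfl⟩ := hs w
  simpa [hx] using LinearMap.congr_fun (F.comm h) v

theorem app_eq_zero_of_map_injective (h : x ≤ y) (hi : Function.Injective (N.map h))
    (hM : M.map h = 0) : F.app x = 0 := by
  refine LinearMap.ext fun v => hi ?_
  simpa [hM] using (LinearMap.congr_fun (F.comm h) v).symm

end PM.Hom

namespace intervalModule

section

variable {α β : ℝ} {x y : ℝ≥0}

theorem val_map (h : x ≤ y) (v : (intervalModule α β).V x) :
    ((intervalModule α β).map h v).1 = (if α ≤ (x : ℝ) ∧ (y : ℝ) < β then 1 else 0) * v.1 :=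
  rfl

theorem mem_of_ne_zero {v : (intervalModule α β).V x} (hv : v ≠ 0) : α ≤ x ∧ x < β := by
  by_contra hx
  have hv₀ := (show ↥(intervalSub α β x) from v).2
  simp only [intervalSub, if_neg hx, Submodule.mem_bot] at hv₀
  exact hv (Subtype.ext hv₀)

theorem map_eq_zero (h : x ≤ y) (hxy : ¬(α ≤ x ∧ y < β)) : (intervalModule α β).map h = 0 :=
  LinearMap.ext fun v => Subtype.ext <| by simp [val_map, hxy]; rfl

theorem map_bijective (h : x ≤ y) (hxy : α ≤ x ∧ y < β) :
    Function.Bijective ((intervalModule α β).map h) := by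
  have hx : intervalSub α β x = ⊤ := if_pos ⟨hxy.1, lt_of_le_of_lt h hxy.2⟩
  refine ⟨fun v w hvw => Subtype.ext ?_,
    fun w => ⟨⟨w.1, hx ▸ Submodule.mem_top⟩, Subtype.ext ?_⟩⟩
  · have hvw' := congrArg Subtype.val hvw
    rwa [val_map, val_map, if_pos hxy, one_mul, one_mul] at hvw'
  · exact (val_map h _).trans (by simp [hxy])

end

variable {a b c d : ℝ} {τ : ℝ≥0}

theorem mem_of_app_ne_zero (F : (intervalModule a b).Hom ((intervalModule c d).shift τ))
    {x : ℝ≥0} (hF : F.app x ≠ 0) : (a ≤ x ∧ x < b) ∧ (c ≤ x + τ ∧ x + τ < d) := by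
  obtain ⟨v, hv⟩ : ∃ v, F.app x v ≠ 0 := not_forall.mp fun h => hF (LinearMap.ext h)
  refine ⟨mem_of_ne_zero (v := v) fun h => hv (by rw [h]; exact map_zero _), ?_⟩
  exact_mod_cast mem_of_ne_zero (x := x + τ) hv

theorem le_add_of_homNeZero_shift (ha : 0 ≤ a)
    (h : HomNeZero (intervalModule a b) ((intervalModule c d).shift τ)) :
    c ≤ a + τ ∧ a + τ < d ∧ d ≤ b + τ := by
  obtain ⟨F, x, hFx⟩ := h
  obtain ⟨hx, -⟩ := mem_of_app_ne_zero F hFx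
  have hax : a.toNNReal ≤ x := Real.toNNReal_le_iff_le_coe.mpr hx.1
  have hFa : F.app a.toNNReal ≠ 0 := fun h₀ => hFx <| F.app_eq_zero_of_map_surjective hax
    (map_bijective hax ⟨by simp [ha], hx.2⟩).2 h₀
  obtain ⟨-, haτ⟩ := mem_of_app_ne_zero F hFa
  rw [Real.coe_toNNReal a ha] at haτ
  refine ⟨haτ.1, haτ.2, le_of_not_gt fun hbd => hFx ?_⟩
  have hb : (b.toNNReal : ℝ) = b := Real.coe_toNNReal b (ha.trans hx.1 |>.trans hx.2.le)
  have hxb : x ≤ b.toNNReal := by rw [← NNReal.coe_le_coe, hb]; exact hx.2.le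
  refine F.app_eq_zero_of_map_injective hxb
    (map_bijective (add_le_add hxb le_rfl) ⟨?_, ?_⟩).1 (map_eq_zero hxb (by simp [hb]))
  · push_cast; linarith
  · push_cast; linarith

noncomputable def homToShift (hca : c ≤ a + τ) (hdb : d ≤ b + τ) :
    (intervalModule a b).Hom ((intervalModule c d).shift τ) where
  app x := LinearMap.codRestrict (intervalSub c d (x + τ))
    ((if c ≤ ((x + τ : ℝ≥0) : ℝ) ∧ ((x + τ : ℝ≥0) : ℝ) < d then (1 : ℝ) else 0) •
      (intervalSub a b x).subtype)
    fun v => by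
      split_ifs with h
      · rw [intervalSub, if_pos h]; trivial
      · show (0 : ℝ) * v.1 ∈ _
        rw [zero_mul]; exact zero_mem _
  comm {x y} hxy := LinearMap.ext fun v => Subtype.ext <| by
    show _ * (_ * v.1) = _ * (_ * v.1)
    by_cases hv : v = 0
    · rw [hv]; show _ * (_ * 0) = _ * (_ * 0); simp
    obtain ⟨hax, hxb⟩ := mem_of_ne_zero hv
    have hxy' : (x : ℝ) ≤ y := hxy
    push_cast
    by_cases hyd : (y : ℝ) + τ < d
    · have hcx : c ≤ (x : ℝ) + τ := by linarith
      simp [hyd, hax, hcx, show c ≤ (y : ℝ) + τ by linarith, show (y : ℝ) < b by linarith,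
        show (x : ℝ) + τ < d by linarith]
    · simp [hyd]

theorem homNeZero_shift_of_le_add (ha : 0 ≤ a) (hab : a < b) (hca : c ≤ a + τ)
    (had : a + τ < d) (hdb : d ≤ b + τ) :
    HomNeZero (intervalModule a b) ((intervalModule c d).shift τ) := by
  refine ⟨homToShift hca hdb, a.toNNReal, fun h => ?_⟩
  have hmem : (1 : ℝ) ∈ intervalSub a b a.toNNReal := by
    rw [intervalSub, if_pos (by simp [ha, hab])]; trivial
  have h₁ := congrArg Subtype.val (LinearMap.congr_fun h ⟨1, hmem⟩)
  change (if c ≤ ((a.toNNReal + τ : ℝ≥0) : ℝ) ∧ ((a.toNNReal + τ : ℝ≥0) : ℝ) < d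
    then (1 : ℝ) else 0) * 1 = 0 at h₁
  simp [ha, hca, had] at h₁

theorem homNeZero_shift_iff (ha : 0 ≤ a) (hab : a < b) :
    HomNeZero (intervalModule a b) ((intervalModule c d).shift τ) ↔
      c ≤ a + τ ∧ a + τ < d ∧ d ≤ b + τ :=
  ⟨le_add_of_homNeZero_shift ha,
    fun ⟨hca, had, hdb⟩ => homNeZero_shift_of_le_add ha hab hca had hdb⟩

theorem homNeZero_shift_iff_of_length_le (ha : 0 ≤ a) (hab : a < b) {ε : ℝ}
    (hb : b - a ≤ 2 * ε) (hd : d - c ≤ 2 * ε) :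
    HomNeZero (intervalModule a b) ((intervalModule c d).shift ε.toNNReal) ↔
      max |a - c| |b - d| ≤ ε ∧ ε < d - a := by
  rw [homNeZero_shift_iff ha hab, Real.coe_toNNReal ε (by linarith),
    interval_shift_bounds_iff hb hd]

theorem not_homNeZero_shift_self (ha : 0 ≤ a) {τ : ℝ} (h : b - a ≤ τ) :
    ¬ HomNeZero (intervalModule a b) ((intervalModule a b).shift τ.toNNReal) := fun hne => by
  have := (le_add_of_homNeZero_shift ha hne).2.1
  linarith [Real.le_coe_toNNReal τ]

theorem homNeZero_shifts_iff_of_half_length_le (ha : 0 ≤ a) (hab : a < b) (hc : 0 ≤ c)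
    (hcd : c < d) {ε : ℝ} (hε : max ((b - a) / 2) ((d - c) / 2) ≤ ε) :
    (HomNeZero (intervalModule a b) ((intervalModule c d).shift ε.toNNReal) ↔
        max |a - c| |b - d| ≤ ε ∧ ε < d - a) ∧
      (HomNeZero (intervalModule c d) ((intervalModule a b).shift ε.toNNReal) ↔
        max |a - c| |b - d| ≤ ε ∧ ε < b - c) ∧
      ¬ HomNeZero (intervalModule a b) ((intervalModule a b).shift (2 * ε).toNNReal) ∧
      ¬ HomNeZero (intervalModule c d) ((intervalModule c d).shift (2 * ε).toNNReal) := by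
  obtain ⟨hb, hd⟩ : b - a ≤ 2 * ε ∧ d - c ≤ 2 * ε := by
    rw [max_le_iff] at hε
    exact ⟨by linarith [hε.1], by linarith [hε.2]⟩
  refine ⟨homNeZero_shift_iff_of_length_le ha hab hb hd, ?_, not_homNeZero_shift_self ha hb,
    not_homNeZero_shift_self hc hd⟩
  rw [homNeZero_shift_iff_of_length_le hc hcd hd hb, abs_sub_comm c a, abs_sub_comm d b]

end intervalModule

theorem stmt0 (a b c d : ℝ) (ha : 0 ≤ a) (hab : a < b) (hc : 0 ≤ c) (hcd : c < d)
    (m₁ m₂ E : ℝ)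
    (hm1 : m₁ = max |a - c| |b - d|) (hm2 : m₂ = max ((b - a) / 2) ((d - c) / 2))
    (hE : E = max |a - d| |b - c|) (hm : m₁ > m₂) :
    m₂ < m₁ ∧ m₁ < E ∧
    (∀ ε : ℝ, m₂ ≤ ε → ε < m₁ →
      ¬ HomNeZero (intervalModule a b) ((intervalModule c d).shift (ε).toNNReal) ∧ ¬ HomNeZero (intervalModule c d) ((intervalModule a b).shift (ε).toNNReal) ∧
      ¬ HomNeZero (intervalModule a b) ((intervalModule a b).shift (2*ε).toNNReal) ∧ ¬ HomNeZero (intervalModule c d) ((intervalModule c d).shift (2*ε).toNNReal)) ∧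
    (∀ ε : ℝ, m₁ ≤ ε → ε < E →
      Xor' (HomNeZero (intervalModule a b) ((intervalModule c d).shift (ε).toNNReal)) (HomNeZero (intervalModule c d) ((intervalModule a b).shift (ε).toNNReal)) ∧
      ¬ HomNeZero (intervalModule a b) ((intervalModule a b).shift (2*ε).toNNReal) ∧ ¬ HomNeZero (intervalModule c d) ((intervalModule c d).shift (2*ε).toNNReal)) ∧
    (∀ ε : ℝ, E ≤ ε →
      ¬ HomNeZero (intervalModule a b) ((intervalModule c d).shift (ε).toNNReal) ∧ ¬ HomNeZero (intervalModule c d) ((intervalModule a b).shift (ε).toNNReal) ∧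
      ¬ HomNeZero (intervalModule a b) ((intervalModule a b).shift (2*ε).toNNReal) ∧ ¬ HomNeZero (intervalModule c d) ((intervalModule c d).shift (2*ε).toNNReal)) := by
  subst hm1 hm2 hE
  have hm₁E := max_abs_sub_lt_max_abs_sub hab hcd
  refine ⟨hm, hm₁E, fun ε h₁ h₂ => ?_, fun ε h₁ h₂ => ?_, fun ε h => ?_⟩
  · obtain ⟨hMN, hNM, hself⟩ :=
      intervalModule.homNeZero_shifts_iff_of_half_length_le ha hab hc hcd h₁
    rw [hMN, hNM]
    exact ⟨fun h => h₂.not_ge h.1, fun h => h₂.not_ge h.1, hself⟩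
  · obtain ⟨hMN, hNM, hself⟩ :=
      intervalModule.homNeZero_shifts_iff_of_half_length_le ha hab hc hcd (hm.le.trans h₁)
    rw [hMN, hNM]
    simpa only [h₁, true_and] using ⟨xor_lt_sub_of_max_abs_sub_le hcd hm h₁ h₂, hself⟩
  · obtain ⟨hMN, hNM, hself⟩ :=
      intervalModule.homNeZero_shifts_iff_of_half_length_le ha hab hc hcd
        (hm.trans (hm₁E.trans_le h)).le
    rw [hMN, hNM]
    refine ⟨fun h' => h'.2.not_ge ?_, fun h' => h'.2.not_ge ?_, hself⟩
    · exact h.trans' (le_max_of_le_left ((le_abs_self _).trans_eq (abs_sub_comm d a)))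
    · exact h.trans' (le_max_of_le_right (le_abs_self _))
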